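/- arXiv:2401.17421 — 3 statements merged into one kernel-verified Lean document; each statement's English description precedes it below -/
import Mathlib

section
/- Let e = {h_1, h_2} be a separating edge of Γ, splitting Γ into Γ_1 and Γ_2 as in the context, with leg-value subsequences A_1, A_2 of sums s_1, s_2 (so s_1 + s_2 = 0). Then for every integer r ≥ 1: (a) every weighting w ∈ W^Γ_{A,r} satisfies w(h_1) = (−s_1) mod r and w(h_2) = (−s_2) mod r; (b) the map sending w ∈ W^Γ_{A,r} to the pair of its restrictions to Γ_1 and Γ_2 (where the new legs ℓ' and ℓ'' receive the values w(h_1) and w(h_2) respectively) is a bijection W^Γ_{A,r} ≅ W^{Γ_1}_{(A_1,−s_1),r} × W^{Γ_2}_{(A_2,−s_2),r}. -/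
open scoped BigOperators

/-- A graph of genus `g` with `n` legs: vertices, half-edges, an involution,
a root map, a list of `n` legs which are exactly the fixed points of the
involution, and a genus function. -/
structure LegGraph (n : ℕ) where
  V : Type
  H : Type
  [fintypeV : Fintype V]
  [fintypeH : Fintype H]
  [decEqV : DecidableEq V]
  [decEqH : DecidableEq H]
  ι : H → H
  ι_invol : ∀ h, ι (ι h) = h
  root : H → V
  leg : Fin n → H
  leg_inj : Function.Injective leg
  leg_iff : ∀ h, ι h = h ↔ ∃ i, leg i = h
  genus : V → ℕ

attribute [instance] LegGraph.fintypeV LegGraph.fintypeH LegGraph.decEqV LegGraph.decEqH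

namespace LegGraph

variable {n : ℕ}

/-- Connectedness: the equivalence relation on `V` generated by relating `r h` and
`r (i h)` has exactly one class. -/
def Connected (G : LegGraph n) : Prop :=
  ∀ v w : G.V, Relation.EqvGen (fun a b => ∃ h : G.H, G.root h = a ∧ G.root (G.ι h) = b) v w

/-- The number of edges: pairs `{h, ι h}` with `ι h ≠ h`. -/
def edgeCard (G : LegGraph n) : ℕ :=
  (Finset.univ.filter fun h : G.H => G.ι h ≠ h).card / 2

/-- The first Betti number `#E - #V + 1` (as an integer). -/
def h1 (G : LegGraph n) : ℤ :=
  (G.edgeCard : ℤ) - (Fintype.card G.V : ℤ) + 1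

/-- The number `n(v)` of half-edges rooted at a vertex `v`. -/
def deg (G : LegGraph n) (v : G.V) : ℕ :=
  (Finset.univ.filter fun h : G.H => G.root h = v).card

/-- The (total) genus of the graph: `∑ g(v) + h¹(Γ)`. -/
def genusTot (G : LegGraph n) : ℤ :=
  (∑ v : G.V, (G.genus v : ℤ)) + G.h1

/-- A weighting for `A` mod `r` (with twist `k`). -/
def IsWeighting (G : LegGraph n) (k : ℤ) (A : Fin n → ℤ) (r : ℕ) (w : G.H → Fin r) : Prop :=
  (∀ i : Fin n, ((w (G.leg i) : ℕ) : ℤ) % (r : ℤ) = A i % (r : ℤ)) ∧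
  (∀ h : G.H, G.ι h ≠ h → (((w h : ℕ) : ℤ) + ((w (G.ι h) : ℕ) : ℤ)) % (r : ℤ) = 0) ∧
  (∀ v : G.V,
    (∑ h ∈ Finset.univ.filter (fun h : G.H => G.root h = v), ((w h : ℕ) : ℤ)) % (r : ℤ)
      = (k * (2 * (G.genus v : ℤ) - 2 + (G.deg v : ℤ))) % (r : ℤ))

open scoped Classical in
/-- The finite set `W^Γ_{A,r}` of weightings for `A` mod `r` (with twist `k`). -/
noncomputable def weightings (G : LegGraph n) (k : ℤ) (A : Fin n → ℤ) (r : ℕ) :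
    Finset (G.H → Fin r) :=
  Finset.univ.filter fun w => G.IsWeighting k A r w

/-- The non-leg half-edges, indexing the variables of the polynomials `Q`. -/
def NonLeg (G : LegGraph n) : Type := {h : G.H // G.ι h ≠ h}

/-- The sum `S^Γ_{A,r}(Q) = r^{-h¹(Γ)} ∑_{w ∈ W^Γ_{A,r}} Q((w h)_h)`. -/
noncomputable def S (G : LegGraph n) (k : ℤ) (A : Fin n → ℤ)
    (Q : MvPolynomial G.NonLeg ℤ) (r : ℕ) : ℚ :=
  (r : ℚ) ^ (-G.h1) * ∑ w ∈ G.weightings k A r,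
    ((MvPolynomial.eval (fun h : G.NonLeg => ((w h.1 : ℕ) : ℤ)) Q : ℤ) : ℚ)

end LegGraph

/-- A function `ℕ → ℚ` is eventually polynomial. -/
def EvPoly (f : ℕ → ℚ) : Prop :=
  ∃ p : Polynomial ℚ, ∃ N : ℕ, ∀ r : ℕ, N ≤ r → f r = p.eval (r : ℚ)

open scoped Classical in
/-- The constant term of the polynomial expression of an eventually polynomial function
(junk value `0` otherwise).  When `EvPoly f` holds this is well defined, i.e. independent
of the choice of polynomial. -/
noncomputable def constTerm (f : ℕ → ℚ) : ℚ :=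
  if h : EvPoly f then (Classical.choose h).eval 0 else 0

/-- `S^Γ_{A,0}(Q)`: the constant term of the eventually polynomial function
`r ↦ S^Γ_{A,r}(Q)`. -/
noncomputable def LegGraph.S0 {n : ℕ} (G : LegGraph n) (k : ℤ) (A : Fin n → ℤ)
    (Q : MvPolynomial G.NonLeg ℤ) : ℚ :=
  constTerm fun r => G.S k A Q r

/-- `m mod r` as an element of `Fin r = {0, …, r-1}`, for an integer `m`. -/
def intFin (r : ℕ) (hr : 0 < r) (m : ℤ) : Fin r :=
  ⟨(m % (r : ℤ)).toNat, by
    have h0 : (0 : ℤ) < (r : ℤ) := by exact_mod_cast hr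
    have h1 : m % (r : ℤ) < (r : ℤ) := Int.emod_lt_of_pos m h0
    have h2 : 0 ≤ m % (r : ℤ) := Int.emod_nonneg m (by omega)
    omega⟩
namespace LegGraph

variable {n : ℕ}

theorem not_leg_of_not_fixed (G : LegGraph n) {h : G.H} (hh : G.ι h ≠ h) :
    ∀ i, G.leg i ≠ h :=
  fun i hi => hh ((G.leg_iff h).2 ⟨i, hi⟩)

/-- The graph `Γ_e` obtained by cutting the edge `e = {h₁, h₂}`: the involution now fixes
`h₁` and `h₂`, which become the two new legs `ℓ_{n+1} = h₁` and `ℓ_{n+2} = h₂`. -/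
def cut (G : LegGraph n) (h₁ h₂ : G.H) (he : G.ι h₁ = h₂) (hne : h₁ ≠ h₂) :
    LegGraph (n + 2) where
  V := G.V
  H := G.H
  ι h := if h = h₁ then h₁ else if h = h₂ then h₂ else G.ι h
  ι_invol := by
    have he' : G.ι h₂ = h₁ := by rw [← he, G.ι_invol]
    intro h
    rcases eq_or_ne h h₁ with rfl | e1
    · simp
    · rcases eq_or_ne h h₂ with rfl | e2
      · simp [Ne.symm hne]
      · have hι1 : G.ι h ≠ h₁ := by
          intro hh
          exact e2 (by rw [← G.ι_invol h, hh, he])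
        have hι2 : G.ι h ≠ h₂ := by
          intro hh
          exact e1 (by rw [← G.ι_invol h, hh, he'])
        simp [e1, e2, hι1, hι2, G.ι_invol]
  root := G.root
  leg := Fin.snoc (Fin.snoc G.leg h₁) h₂
  leg_inj := by
    have hb₁ : G.ι h₁ ≠ h₁ := by rw [he]; exact Ne.symm hne
    have he' : G.ι h₂ = h₁ := by rw [← he, G.ι_invol]
    have hb₂ : G.ι h₂ ≠ h₂ := by rw [he']; exact hne
    have hl₁ := G.not_leg_of_not_fixed hb₁
    have hl₂ := G.not_leg_of_not_fixed hb₂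
    intro i j hij
    induction i using Fin.lastCases with
    | last =>
      induction j using Fin.lastCases with
      | last => rfl
      | cast j =>
        rw [Fin.snoc_last, Fin.snoc_castSucc] at hij
        induction j using Fin.lastCases with
        | last => rw [Fin.snoc_last] at hij; exact absurd hij.symm hne
        | cast j => rw [Fin.snoc_castSucc] at hij; exact absurd hij.symm (hl₂ j)
    | cast i =>
      induction j using Fin.lastCases with
      | last =>
        rw [Fin.snoc_last, Fin.snoc_castSucc] at hij
        induction i using Fin.lastCases with
        | last => rw [Fin.snoc_last] at hij; exact absurd hij hne
        | cast i => rw [Fin.snoc_castSucc] at hij; exact absurd hij (hl₂ i)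
      | cast j =>
        rw [Fin.snoc_castSucc, Fin.snoc_castSucc] at hij
        induction i using Fin.lastCases with
        | last =>
          induction j using Fin.lastCases with
          | last => rfl
          | cast j =>
            rw [Fin.snoc_last, Fin.snoc_castSucc] at hij
            exact absurd hij.symm (hl₁ j)
        | cast i =>
          induction j using Fin.lastCases with
          | last =>
            rw [Fin.snoc_last, Fin.snoc_castSucc] at hij
            exact absurd hij (hl₁ i)
          | cast j =>
            rw [Fin.snoc_castSucc, Fin.snoc_castSucc] at hij
            rw [G.leg_inj hij]
  genus := G.genus
  leg_iff := by
    have hb₁ : G.ι h₁ ≠ h₁ := by rw [he]; exact Ne.symm hne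
    have he' : G.ι h₂ = h₁ := by rw [← he, G.ι_invol]
    intro h
    constructor
    · intro hfix
      rcases eq_or_ne h h₁ with rfl | e1
      · exact ⟨(Fin.last n).castSucc, by
          rw [Fin.snoc_castSucc, Fin.snoc_last]⟩
      · rcases eq_or_ne h h₂ with rfl | e2
        · exact ⟨Fin.last (n + 1), by rw [Fin.snoc_last]⟩
        · simp only [if_neg e1, if_neg e2] at hfix
          obtain ⟨i, hi⟩ := (G.leg_iff h).1 hfix
          exact ⟨i.castSucc.castSucc, by rw [Fin.snoc_castSucc, Fin.snoc_castSucc]; exact hi⟩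
    · rintro ⟨i, rfl⟩
      induction i using Fin.lastCases with
      | last =>
        rw [Fin.snoc_last]
        simp [Ne.symm hne]
      | cast i =>
        rw [Fin.snoc_castSucc]
        induction i using Fin.lastCases with
        | last => rw [Fin.snoc_last]; simp
        | cast i =>
          rw [Fin.snoc_castSucc]
          have h1 := G.not_leg_of_not_fixed hb₁ i
          have h2 := G.not_leg_of_not_fixed (show G.ι h₂ ≠ h₂ by rw [he']; exact hne) i
          show (if G.leg i = h₁ then h₁ else if G.leg i = h₂ then h₂ else G.ι (G.leg i))
              = G.leg i
          rw [if_neg h1, if_neg h2]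
          exact (G.leg_iff (G.leg i)).2 ⟨i, rfl⟩

end LegGraph
namespace LegGraph

variable {n : ℕ}

/-- The graph `Γ'` obtained from `Γ` by attaching one new leg at every vertex. -/
noncomputable def addLegs (G : LegGraph n) : LegGraph (n + Fintype.card G.V) where
  V := G.V
  H := G.H ⊕ G.V
  ι := Sum.map G.ι id
  ι_invol := by rintro (h | v) <;> simp [G.ι_invol]
  root := Sum.elim G.root id
  leg i :=
    if hi : (i : ℕ) < n then Sum.inl (G.leg ⟨(i : ℕ), hi⟩)
    else Sum.inr ((Fintype.equivFin G.V).symm ⟨(i : ℕ) - n, by have := i.isLt; omega⟩)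
  leg_inj := by
    intro i j hij
    beta_reduce at hij
    by_cases hi : (i : ℕ) < n <;> by_cases hj : (j : ℕ) < n
    · rw [dif_pos hi, dif_pos hj] at hij
      have h2 := G.leg_inj (Sum.inl_injective hij)
      have h3 : (i : ℕ) = (j : ℕ) := by simpa using congrArg Fin.val h2
      exact Fin.ext h3
    · rw [dif_pos hi, dif_neg hj] at hij
      exact absurd hij (by simp)
    · rw [dif_neg hi, dif_pos hj] at hij
      exact absurd hij (by simp)
    · rw [dif_neg hi, dif_neg hj] at hij
      have h2 := (Fintype.equivFin G.V).symm.injective (Sum.inr_injective hij)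
      have h3 : (i : ℕ) - n = (j : ℕ) - n := by simpa using congrArg Fin.val h2
      exact Fin.ext (by omega)
  leg_iff := by
    rintro (h | v)
    · constructor
      · intro hfix
        have : G.ι h = h := Sum.inl_injective hfix
        obtain ⟨i, hi⟩ := (G.leg_iff h).1 this
        refine ⟨⟨(i : ℕ), by have := i.isLt; omega⟩, ?_⟩
        beta_reduce
        rw [dif_pos i.isLt]
        exact congrArg Sum.inl (by rw [show (⟨(i : ℕ), i.isLt⟩ : Fin n) = i from rfl, hi])
      · rintro ⟨i, hi⟩
        beta_reduce at hi
        by_cases h' : (i : ℕ) < n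
        · rw [dif_pos h'] at hi
          have := Sum.inl_injective hi
          have hfix : G.ι h = h := (G.leg_iff h).2 ⟨⟨(i : ℕ), h'⟩, this⟩
          exact congrArg Sum.inl hfix
        · rw [dif_neg h'] at hi
          exact absurd hi (by simp)
    · constructor
      · intro _
        refine ⟨⟨n + (Fintype.equivFin G.V v : ℕ), by
            have := (Fintype.equivFin G.V v).isLt; omega⟩, ?_⟩
        beta_reduce
        rw [dif_neg (by simp only [Fin.val_mk]; omega)]
        refine congrArg Sum.inr ?_
        rw [Equiv.symm_apply_eq]
        exact Fin.ext (by simp)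
      · intro _
        rfl
  genus := G.genus

end LegGraph
/-- The data exhibiting an edge `e = {h₁, h₂}` of `Γ` as a separating edge splitting `Γ`
into two connected graphs `Γ₁` (containing the root of `h₁`, with one new leg `ℓ'` at the
root of `h₁`, placed last) and `Γ₂` (containing the root of `h₂`, with one new leg `ℓ''`
at the root of `h₂`, placed last). -/
structure EdgeSplit {n n₁ n₂ : ℕ} (G : LegGraph n) (G₁ : LegGraph (n₁ + 1))
    (G₂ : LegGraph (n₂ + 1)) (h₁ h₂ : G.H) where
  he : G.ι h₁ = h₂
  hne : h₁ ≠ h₂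
  conn : G.Connected
  conn₁ : G₁.Connected
  conn₂ : G₂.Connected
  eV : G.V ≃ G₁.V ⊕ G₂.V
  eH : G.H ≃ G₁.H ⊕ G₂.H
  σ : Fin n ≃ Fin n₁ ⊕ Fin n₂
  map_h₁ : eH h₁ = Sum.inl (G₁.leg (Fin.last n₁))
  map_h₂ : eH h₂ = Sum.inr (G₂.leg (Fin.last n₂))
  ι_compat : ∀ h : G.H, h ≠ h₁ → h ≠ h₂ → eH (G.ι h) = Sum.map G₁.ι G₂.ι (eH h)
  root_compat : ∀ h : G.H, eV (G.root h) = Sum.map G₁.root G₂.root (eH h)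
  leg_compat : ∀ i : Fin n, eH (G.leg i) =
    Sum.map (fun j : Fin n₁ => G₁.leg j.castSucc) (fun j : Fin n₂ => G₂.leg j.castSucc) (σ i)
  genus_compat : ∀ v : G.V, G.genus v = Sum.elim G₁.genus G₂.genus (eV v)

/-- The class of graphs obtained from a given graph by repeatedly cutting edges. -/
inductive CutDesc : {m : ℕ} → LegGraph m → {m' : ℕ} → LegGraph m' → Prop
  | refl {m : ℕ} (G : LegGraph m) : CutDesc G G
  | cut {m m' : ℕ} (G : LegGraph m) (G' : LegGraph m') (h₁ h₂ : G'.H)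
      (he : G'.ι h₁ = h₂) (hne : h₁ ≠ h₂) :
      CutDesc G G' → CutDesc G (G'.cut h₁ h₂ he hne)

/-- The class of graphs obtained from a given graph by adding legs and repeatedly
cutting edges. -/
inductive Desc : {m : ℕ} → LegGraph m → {m' : ℕ} → LegGraph m' → Prop
  | refl {m : ℕ} (G : LegGraph m) : Desc G G
  | cut {m m' : ℕ} (G : LegGraph m) (G' : LegGraph m') (h₁ h₂ : G'.H)
      (he : G'.ι h₁ = h₂) (hne : h₁ ≠ h₂) :
      Desc G G' → Desc G (G'.cut h₁ h₂ he hne)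
  | addLegs {m m' : ℕ} (G : LegGraph m) (G' : LegGraph m') :
      Desc G G' → Desc G G'.addLegs

section ModCastHelpers

lemma emod_eq_iff_cast (r : ℕ) (a b : ℤ) :
    a % (r : ℤ) = b % (r : ℤ) ↔ ((a : ZMod r) = (b : ZMod r)) := by
  rw [ZMod.intCast_eq_intCast_iff]
  exact Iff.rfl

lemma emod_eq_zero_iff_cast (r : ℕ) (a : ℤ) :
    a % (r : ℤ) = 0 ↔ ((a : ZMod r) = 0) := by
  have := emod_eq_iff_cast r a 0
  simp only [Int.zero_emod, Int.cast_zero] at this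
  exact this

lemma sum_split {α β γ M : Type*} [Fintype α] [Fintype β] [Fintype γ] [AddCommMonoid M]
    (e : α ≃ β ⊕ γ) (P : α → Prop) [DecidablePred P] (Q : β → Prop) [DecidablePred Q]
    (f : α → M)
    (h1 : ∀ y : β, P (e.symm (Sum.inl y)) ↔ Q y)
    (h2 : ∀ z : γ, ¬ P (e.symm (Sum.inr z))) :
    ∑ x ∈ Finset.univ.filter P, f x = ∑ y ∈ Finset.univ.filter Q, f (e.symm (Sum.inl y)) := by
  rw [Finset.sum_filter, Finset.sum_filter,
    ← Equiv.sum_comp e.symm (fun x => if P x then f x else 0), Fintype.sum_sum_type]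
  simp only [h2, if_false, Finset.sum_const_zero, add_zero]
  exact Finset.sum_congr rfl fun y _ => by rw [if_congr (h1 y) rfl rfl]

end ModCastHelpers

namespace LegGraph

lemma isWeighting_zero_iff {n : ℕ} (G : LegGraph n) (A : Fin n → ℤ) (r : ℕ) (w : G.H → Fin r) :
    G.IsWeighting 0 A r w ↔
      ((∀ i, ((w (G.leg i) : ℕ) : ZMod r) = ((A i : ℤ) : ZMod r)) ∧
       (∀ h, G.ι h ≠ h → ((w h : ℕ) : ZMod r) + ((w (G.ι h) : ℕ) : ZMod r) = 0) ∧
       (∀ v, ∑ h ∈ Finset.univ.filter (fun h : G.H => G.root h = v),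
          ((w h : ℕ) : ZMod r) = 0)) := by
  unfold IsWeighting
  refine and_congr ?_ (and_congr ?_ ?_)
  · refine forall_congr' fun i => ?_
    rw [emod_eq_iff_cast]
    push_cast
    exact Iff.rfl
  · refine forall_congr' fun h => imp_congr_right fun _ => ?_
    rw [emod_eq_zero_iff_cast]
    push_cast
    exact Iff.rfl
  · refine forall_congr' fun v => ?_
    rw [show ((0:ℤ) * (2 * (G.genus v : ℤ) - 2 + (G.deg v : ℤ))) % (r:ℤ) = 0 by simp,
      emod_eq_zero_iff_cast]
    push_cast
    exact Iff.rfl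

end LegGraph

namespace EdgeSplit

variable {n n₁ n₂ : ℕ} {G : LegGraph n} {G₁ : LegGraph (n₁ + 1)} {G₂ : LegGraph (n₂ + 1)}
  {h₁ h₂ : G.H} (E : EdgeSplit G G₁ G₂ h₁ h₂)

lemma root_symm_inl (h : G₁.H) :
    G.root (E.eH.symm (Sum.inl h)) = E.eV.symm (Sum.inl (G₁.root h)) := by
  have h2 := E.root_compat (E.eH.symm (Sum.inl h))
  rw [Equiv.apply_symm_apply] at h2
  exact E.eV.injective (by rw [h2, Equiv.apply_symm_apply]; rfl)

lemma root_symm_inr (h : G₂.H) :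
    G.root (E.eH.symm (Sum.inr h)) = E.eV.symm (Sum.inr (G₂.root h)) := by
  have h2 := E.root_compat (E.eH.symm (Sum.inr h))
  rw [Equiv.apply_symm_apply] at h2
  exact E.eV.injective (by rw [h2, Equiv.apply_symm_apply]; rfl)

lemma symm_inl_ne_h₁ {h : G₁.H} (hh : G₁.ι h ≠ h) : E.eH.symm (Sum.inl h) ≠ h₁ := by
  intro hc
  apply hh
  have h3 : Sum.inl h = E.eH h₁ := by
    have := congrArg E.eH hc
    rwa [Equiv.apply_symm_apply] at this
  rw [E.map_h₁] at h3
  have h4 : h = G₁.leg (Fin.last n₁) := Sum.inl_injective h3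
  rw [h4]
  exact (G₁.leg_iff _).2 ⟨_, rfl⟩

lemma symm_inl_ne_h₂ (h : G₁.H) : E.eH.symm (Sum.inl h) ≠ h₂ := by
  intro hc
  have h3 : Sum.inl h = E.eH h₂ := by
    have := congrArg E.eH hc
    rwa [Equiv.apply_symm_apply] at this
  rw [E.map_h₂] at h3
  exact absurd h3 (by simp)

lemma transport_ι {h : G₁.H} (hh : G₁.ι h ≠ h) :
    G.ι (E.eH.symm (Sum.inl h)) = E.eH.symm (Sum.inl (G₁.ι h)) ∧
      G.ι (E.eH.symm (Sum.inl h)) ≠ E.eH.symm (Sum.inl h) := by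
  have hc := E.ι_compat (E.eH.symm (Sum.inl h)) (E.symm_inl_ne_h₁ hh) (E.symm_inl_ne_h₂ h)
  rw [Equiv.apply_symm_apply] at hc
  have heq : G.ι (E.eH.symm (Sum.inl h)) = E.eH.symm (Sum.inl (G₁.ι h)) := by
    apply E.eH.injective
    rw [hc, Equiv.apply_symm_apply]
    rfl
  refine ⟨heq, fun hc2 => hh ?_⟩
  rw [heq] at hc2
  exact Sum.inl_injective (E.eH.symm.injective hc2)

/-- Transport of the vertex condition to `G₁`. -/
lemma vertex_sum_inl {r : ℕ} (w : G.H → Fin r)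
    (hvert : ∀ v : G.V, ∑ h ∈ Finset.univ.filter (fun h : G.H => G.root h = v),
      ((w h : ℕ) : ZMod r) = 0) (v : G₁.V) :
    ∑ h ∈ Finset.univ.filter (fun h : G₁.H => G₁.root h = v),
      ((w (E.eH.symm (Sum.inl h)) : ℕ) : ZMod r) = 0 := by
  have := hvert (E.eV.symm (Sum.inl v))
  rwa [sum_split E.eH (fun h => G.root h = E.eV.symm (Sum.inl v))
    (fun h : G₁.H => G₁.root h = v) (fun h => ((w h : ℕ) : ZMod r))
    (fun y => by simp only [E.root_symm_inl y]; simp)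
    (fun z => by simp only [E.root_symm_inr z]; simp)] at this

/-- Part (a): the value of a weighting at `h₁`, in `ZMod r`. -/
lemma wh1 (A : Fin n → ℤ) (s₁ : ℤ)
    (hs₁ : s₁ = ∑ j : Fin n₁, A (E.σ.symm (Sum.inl j)))
    (r : ℕ) (w : G.H → Fin r) (hw : G.IsWeighting 0 A r w) :
    ((w h₁ : ℕ) : ZMod r) = ((-s₁ : ℤ) : ZMod r) := by
  rw [G.isWeighting_zero_iff] at hw
  obtain ⟨hleg, hedge, hvert⟩ := hw
  set f : G₁.H → ZMod r := fun h => ((w (E.eH.symm (Sum.inl h)) : ℕ) : ZMod r) with hf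
  have htot : ∑ h : G₁.H, f h = 0 := by
    rw [← Finset.sum_fiberwise Finset.univ (fun h : G₁.H => G₁.root h) f]
    exact Finset.sum_eq_zero fun v _ => E.vertex_sum_inl w hvert v
  have hnon : ∑ h ∈ Finset.univ.filter (fun h : G₁.H => ¬ G₁.ι h = h), f h = 0 := by
    refine Finset.sum_involution (fun h _ => G₁.ι h) ?_ ?_ ?_ ?_
    · intro a ha
      have hma : G₁.ι a ≠ a := by simpa using ha
      obtain ⟨hιeq, hιne⟩ := E.transport_ι hma
      have h5 := hedge _ hιne
      rw [hιeq] at h5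
      exact h5
    · intro a ha _
      simpa using ha
    · intro a ha
      have hma : G₁.ι a ≠ a := by simpa using ha
      simp only [Finset.mem_filter, Finset.mem_univ, true_and]
      rw [G₁.ι_invol]
      exact fun hc => hma hc.symm
    · intro a ha
      exact G₁.ι_invol a
  have hlegsum : ∑ h ∈ Finset.univ.filter (fun h : G₁.H => G₁.ι h = h), f h
      = ∑ i : Fin (n₁ + 1), f (G₁.leg i) := by
    refine (Finset.sum_bij (fun (i : Fin (n₁ + 1)) _ => G₁.leg i) ?_ ?_ ?_ ?_).symm
    · intro i _
      simp only [Finset.mem_filter, Finset.mem_univ, true_and]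
      exact (G₁.leg_iff _).2 ⟨i, rfl⟩
    · intro a _ b _ hab
      exact G₁.leg_inj hab
    · intro b hb
      obtain ⟨i, hi⟩ := (G₁.leg_iff b).1 (by simpa using hb)
      exact ⟨i, Finset.mem_univ i, hi⟩
    · intro i _
      rfl
  have hsplitsum := Finset.sum_filter_add_sum_filter_not Finset.univ
    (fun h : G₁.H => G₁.ι h = h) f
  rw [htot, hnon, add_zero, hlegsum] at hsplitsum
  rw [Fin.sum_univ_castSucc] at hsplitsum
  have hfleg : ∀ j : Fin n₁, f (G₁.leg j.castSucc)
      = ((A (E.σ.symm (Sum.inl j)) : ℤ) : ZMod r) := by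
    intro j
    have h3 := E.leg_compat (E.σ.symm (Sum.inl j))
    rw [Equiv.apply_symm_apply] at h3
    have h4 : E.eH.symm (Sum.inl (G₁.leg j.castSucc)) = G.leg (E.σ.symm (Sum.inl j)) := by
      apply E.eH.injective
      rw [Equiv.apply_symm_apply, h3]
      rfl
    rw [hf]
    simp only [h4]
    exact hleg _
  have hflast : f (G₁.leg (Fin.last n₁)) = ((w h₁ : ℕ) : ZMod r) := by
    have h4 : E.eH.symm (Sum.inl (G₁.leg (Fin.last n₁))) = h₁ := by
      rw [← E.map_h₁, Equiv.symm_apply_apply]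
    rw [hf]
    simp only [h4]
  rw [hflast] at hsplitsum
  have hsum : (∑ j : Fin n₁, f (G₁.leg j.castSucc)) = ((s₁ : ℤ) : ZMod r) := by
    rw [hs₁]
    push_cast
    exact Finset.sum_congr rfl fun j _ => hfleg j
  rw [hsum] at hsplitsum
  push_cast
  linear_combination hsplitsum

/-- The same edge split, with the two sides exchanged. -/
def swap : EdgeSplit G G₂ G₁ h₂ h₁ where
  he := by rw [← E.he, G.ι_invol]
  hne := Ne.symm E.hne
  conn := E.conn
  conn₁ := E.conn₂
  conn₂ := E.conn₁
  eV := E.eV.trans (Equiv.sumComm _ _)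
  eH := E.eH.trans (Equiv.sumComm _ _)
  σ := E.σ.trans (Equiv.sumComm _ _)
  map_h₁ := by simp [Equiv.trans_apply, E.map_h₂]
  map_h₂ := by simp [Equiv.trans_apply, E.map_h₁]
  ι_compat := fun h hh2 hh1 => by
    simp only [Equiv.trans_apply, E.ι_compat h hh1 hh2]
    cases E.eH h <;> rfl
  root_compat := fun h => by
    simp only [Equiv.trans_apply, E.root_compat h]
    cases E.eH h <;> rfl
  leg_compat := fun i => by
    simp only [Equiv.trans_apply, E.leg_compat i]
    cases E.σ i <;> rfl
  genus_compat := fun v => by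
    rw [E.genus_compat v]
    simp only [Equiv.trans_apply]
    cases E.eV v <;> rfl

@[simp] lemma swap_eH_symm_inl (h : G₂.H) :
    E.swap.eH.symm (Sum.inl h) = E.eH.symm (Sum.inr h) := rfl

@[simp] lemma swap_σ_symm_inl (j : Fin n₂) :
    E.swap.σ.symm (Sum.inl j) = E.σ.symm (Sum.inr j) := rfl

/-- Restriction of a weighting to `G₁` is a weighting. -/
lemma restrict_isWeighting (A : Fin n → ℤ) (s₁ : ℤ)
    (hs₁ : s₁ = ∑ j : Fin n₁, A (E.σ.symm (Sum.inl j)))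
    (A₁ : Fin (n₁ + 1) → ℤ)
    (hA₁ : A₁ = Fin.snoc (fun j : Fin n₁ => A (E.σ.symm (Sum.inl j))) (-s₁))
    (r : ℕ) (w : G.H → Fin r) (hw : G.IsWeighting 0 A r w) :
    G₁.IsWeighting 0 A₁ r (fun h => w (E.eH.symm (Sum.inl h))) := by
  have hwh₁ := E.wh1 A s₁ hs₁ r w hw
  rw [G.isWeighting_zero_iff] at hw
  obtain ⟨hleg, hedge, hvert⟩ := hw
  rw [G₁.isWeighting_zero_iff]
  refine ⟨?_, ?_, ?_⟩
  · intro i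
    induction i using Fin.lastCases with
    | last =>
      have h4 : E.eH.symm (Sum.inl (G₁.leg (Fin.last n₁))) = h₁ := by
        rw [← E.map_h₁, Equiv.symm_apply_apply]
      simp only [h4, hA₁, Fin.snoc_last]
      exact hwh₁
    | cast j =>
      have h3 := E.leg_compat (E.σ.symm (Sum.inl j))
      rw [Equiv.apply_symm_apply] at h3
      have h4 : E.eH.symm (Sum.inl (G₁.leg j.castSucc)) = G.leg (E.σ.symm (Sum.inl j)) := by
        apply E.eH.injective
        rw [Equiv.apply_symm_apply, h3]
        rfl
      simp only [h4, hA₁, Fin.snoc_castSucc]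
      exact hleg _
  · intro h hh
    obtain ⟨hιeq, hιne⟩ := E.transport_ι hh
    have h5 := hedge _ hιne
    rw [hιeq] at h5
    exact h5
  · exact E.vertex_sum_inl w hvert

/-- Gluing two weightings along the split gives a weighting. -/
lemma glue_isWeighting (A : Fin n → ℤ) (s₁ s₂ : ℤ)
    (hs₁ : s₁ = ∑ j : Fin n₁, A (E.σ.symm (Sum.inl j)))
    (hs₂ : s₂ = ∑ j : Fin n₂, A (E.σ.symm (Sum.inr j)))
    (hsum : s₁ + s₂ = 0)
    (A₁ : Fin (n₁ + 1) → ℤ)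
    (hA₁ : A₁ = Fin.snoc (fun j : Fin n₁ => A (E.σ.symm (Sum.inl j))) (-s₁))
    (A₂ : Fin (n₂ + 1) → ℤ)
    (hA₂ : A₂ = Fin.snoc (fun j : Fin n₂ => A (E.σ.symm (Sum.inr j))) (-s₂))
    (r : ℕ) (w₁ : G₁.H → Fin r) (w₂ : G₂.H → Fin r)
    (hw₁ : G₁.IsWeighting 0 A₁ r w₁) (hw₂ : G₂.IsWeighting 0 A₂ r w₂) :
    G.IsWeighting 0 A r (fun h => Sum.elim w₁ w₂ (E.eH h)) := by
  rw [G₁.isWeighting_zero_iff] at hw₁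
  rw [G₂.isWeighting_zero_iff] at hw₂
  obtain ⟨hleg₁, hedge₁, hvert₁⟩ := hw₁
  obtain ⟨hleg₂, hedge₂, hvert₂⟩ := hw₂
  rw [G.isWeighting_zero_iff]
  have hwh1val : (((Sum.elim w₁ w₂ (E.eH h₁) : Fin r) : ℕ) : ZMod r) = ((-s₁ : ℤ) : ZMod r) := by
    rw [E.map_h₁]
    have h5 := hleg₁ (Fin.last n₁)
    rw [hA₁] at h5
    simpa [Fin.snoc_last] using h5
  have hwh2val : (((Sum.elim w₁ w₂ (E.eH h₂) : Fin r) : ℕ) : ZMod r) = ((-s₂ : ℤ) : ZMod r) := by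
    rw [E.map_h₂]
    have h5 := hleg₂ (Fin.last n₂)
    rw [hA₂] at h5
    simpa [Fin.snoc_last] using h5
  refine ⟨?_, ?_, ?_⟩
  · intro i
    have h3 := E.leg_compat i
    rcases hx : E.σ i with j | j
    · rw [hx] at h3
      have hAi : A (E.σ.symm (Sum.inl j)) = A i := by rw [← hx, Equiv.symm_apply_apply]
      have h5 := hleg₁ j.castSucc
      rw [hA₁] at h5
      simp only [Fin.snoc_castSucc] at h5
      simp only [h3]
      simpa [hAi] using h5
    · rw [hx] at h3
      have hAi : A (E.σ.symm (Sum.inr j)) = A i := by rw [← hx, Equiv.symm_apply_apply]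
      have h5 := hleg₂ j.castSucc
      rw [hA₂] at h5
      simp only [Fin.snoc_castSucc] at h5
      simp only [h3]
      simpa [hAi] using h5
  · intro h hh
    by_cases hc1 : h = h₁
    · subst hc1
      rw [E.he]
      simp only [hwh1val, hwh2val]
      have h6 : ((s₁ + s₂ : ℤ) : ZMod r) = 0 := by rw [hsum]; simp
      push_cast at h6 ⊢
      linear_combination -h6
    · by_cases hc2 : h = h₂
      · subst hc2
        have hι21 : G.ι h = h₁ := by rw [← E.he, G.ι_invol]
        rw [hι21]
        simp only [hwh1val, hwh2val]
        have h6 : ((s₁ + s₂ : ℤ) : ZMod r) = 0 := by rw [hsum]; simp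
        push_cast at h6 ⊢
        linear_combination -h6
      · have hc := E.ι_compat h hc1 hc2
        rcases hx : E.eH h with a | a
        · rw [hx] at hc
          have ha : G₁.ι a ≠ a := by
            intro haa
            apply hh
            apply E.eH.injective
            rw [hc, hx]
            simp [haa]
          have h5 := hedge₁ a ha
          simp only [hx, hc]
          simpa using h5
        · rw [hx] at hc
          have ha : G₂.ι a ≠ a := by
            intro haa
            apply hh
            apply E.eH.injective
            rw [hc, hx]
            simp [haa]
          have h5 := hedge₂ a ha
          simp only [hx, hc]
          simpa using h5
  · intro v
    rcases hv : E.eV v with v₁ | v₂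
    · rw [sum_split E.eH (fun h => G.root h = v) (fun a : G₁.H => G₁.root a = v₁)
        (fun h => (((Sum.elim w₁ w₂ (E.eH h) : Fin r) : ℕ) : ZMod r))
        (fun y => by
          simp only [E.root_symm_inl y, Equiv.symm_apply_eq, hv]
          simp)
        (fun z => by
          simp only [E.root_symm_inr z, Equiv.symm_apply_eq, hv]
          simp)]
      refine Eq.trans (Finset.sum_congr rfl fun a _ => ?_) (hvert₁ v₁)
      rw [Equiv.apply_symm_apply]
      rfl
    · rw [sum_split (E.eH.trans (Equiv.sumComm _ _)) (fun h => G.root h = v)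
        (fun a : G₂.H => G₂.root a = v₂)
        (fun h => (((Sum.elim w₁ w₂ (E.eH h) : Fin r) : ℕ) : ZMod r))
        (fun y => by
          show G.root (E.eH.symm (Sum.inr y)) = v ↔ _
          simp only [E.root_symm_inr y, Equiv.symm_apply_eq, hv]
          simp)
        (fun z => by
          show ¬ G.root (E.eH.symm (Sum.inl z)) = v
          simp only [E.root_symm_inl z, Equiv.symm_apply_eq, hv]
          simp)]
      refine Eq.trans (Finset.sum_congr rfl fun a _ => ?_) (hvert₂ v₂)
      show (((Sum.elim w₁ w₂ (E.eH (E.eH.symm (Sum.inr a))) : Fin r) : ℕ) : ZMod r) = _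
      rw [Equiv.apply_symm_apply]
      rfl


end EdgeSplit

/-- For a separating edge `e = {h₁, h₂}` splitting `Γ` into `Γ₁`, `Γ₂`:
(a) every weighting `w ∈ W^Γ_{A,r}` has `w h₁ = (-s₁) mod r` and `w h₂ = (-s₂) mod r`;
(b) restriction gives a bijection `W^Γ_{A,r} ≅ W^{Γ₁}_{(A₁,-s₁),r} × W^{Γ₂}_{(A₂,-s₂),r}`. -/
theorem separating_edge_weightings {n n₁ n₂ : ℕ} (G : LegGraph n)
    (G₁ : LegGraph (n₁ + 1)) (G₂ : LegGraph (n₂ + 1)) (h₁ h₂ : G.H)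
    (E : EdgeSplit G G₁ G₂ h₁ h₂)
    (A : Fin n → ℤ) (hA : ∑ i, A i = 0)
    (s₁ s₂ : ℤ)
    (hs₁ : s₁ = ∑ j : Fin n₁, A (E.σ.symm (Sum.inl j)))
    (hs₂ : s₂ = ∑ j : Fin n₂, A (E.σ.symm (Sum.inr j)))
    (A₁ : Fin (n₁ + 1) → ℤ)
    (hA₁ : A₁ = Fin.snoc (fun j : Fin n₁ => A (E.σ.symm (Sum.inl j))) (-s₁))
    (A₂ : Fin (n₂ + 1) → ℤ)
    (hA₂ : A₂ = Fin.snoc (fun j : Fin n₂ => A (E.σ.symm (Sum.inr j))) (-s₂))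
    (r : ℕ) (hr : 1 ≤ r) :
    (∀ w ∈ G.weightings 0 A r,
      ((w h₁ : ℕ) : ℤ) = (-s₁) % (r : ℤ) ∧ ((w h₂ : ℕ) : ℤ) = (-s₂) % (r : ℤ)) ∧
    Set.BijOn
      (fun w : G.H → Fin r =>
        ((fun h : G₁.H => w (E.eH.symm (Sum.inl h))),
          (fun h : G₂.H => w (E.eH.symm (Sum.inr h)))))
      (↑(G.weightings 0 A r))
      ((↑(G₁.weightings 0 A₁ r) : Set (G₁.H → Fin r)) ×ˢ
        (↑(G₂.weightings 0 A₂ r) : Set (G₂.H → Fin r))) := by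
    classical
  have hmemG : ∀ w : G.H → Fin r,
      w ∈ (G.weightings 0 A r : Set (G.H → Fin r)) ↔ G.IsWeighting 0 A r w := by
    intro w; simp [LegGraph.weightings]
  have hmemG₁ : ∀ w : G₁.H → Fin r,
      w ∈ (G₁.weightings 0 A₁ r : Set (G₁.H → Fin r)) ↔ G₁.IsWeighting 0 A₁ r w := by
    intro w; simp [LegGraph.weightings]
  have hmemG₂ : ∀ w : G₂.H → Fin r,
      w ∈ (G₂.weightings 0 A₂ r : Set (G₂.H → Fin r)) ↔ G₂.IsWeighting 0 A₂ r w := by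
    intro w; simp [LegGraph.weightings]
  have hsum : s₁ + s₂ = 0 := by
    have h0 := Equiv.sum_comp E.σ.symm A
    rw [Fintype.sum_sum_type, hA] at h0
    rw [hs₁, hs₂]
    simpa using h0
  have hs₂' : s₂ = ∑ j : Fin n₂, A (E.swap.σ.symm (Sum.inl j)) := by
    rw [hs₂]; rfl
  have hA₂' : A₂ = Fin.snoc (fun j : Fin n₂ => A (E.swap.σ.symm (Sum.inl j))) (-s₂) := by
    rw [hA₂]; rfl
  constructor
  · intro w hw
    have hw' : G.IsWeighting 0 A r w := by
      rw [LegGraph.weightings, Finset.mem_filter] at hw; exact hw.2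
    have ha1 := E.wh1 A s₁ hs₁ r w hw'
    have ha2 := E.swap.wh1 A s₂ hs₂' r w hw'
    constructor
    · have hmod : ((w h₁ : ℕ) : ℤ) % (r : ℤ) = (-s₁) % (r : ℤ) := by
        rw [emod_eq_iff_cast]
        push_cast at ha1 ⊢
        exact ha1
      have hb : ((w h₁ : ℕ) : ℤ) < (r : ℤ) := by exact_mod_cast (w h₁).isLt
      rwa [Int.emod_eq_of_lt (Int.natCast_nonneg _) hb] at hmod
    · have hmod : ((w h₂ : ℕ) : ℤ) % (r : ℤ) = (-s₂) % (r : ℤ) := by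
        rw [emod_eq_iff_cast]
        push_cast at ha2 ⊢
        exact ha2
      have hb : ((w h₂ : ℕ) : ℤ) < (r : ℤ) := by exact_mod_cast (w h₂).isLt
      rwa [Int.emod_eq_of_lt (Int.natCast_nonneg _) hb] at hmod
  · refine ⟨?_, ?_, ?_⟩
    · intro w hw
      have hw' : G.IsWeighting 0 A r w := (hmemG w).1 hw
      exact ⟨(hmemG₁ _).2 (E.restrict_isWeighting A s₁ hs₁ A₁ hA₁ r w hw'),
        (hmemG₂ _).2 (E.swap.restrict_isWeighting A s₂ hs₂' A₂ hA₂' r w hw')⟩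
    · intro w hw w' hw' heq
      funext h
      have h1 := congrFun (congrArg Prod.fst heq)
      have h2 := congrFun (congrArg Prod.snd heq)
      rcases hx : E.eH h with a | a
      · have h3 := h1 a
        simp only at h3
        rwa [show E.eH.symm (Sum.inl a) = h by rw [← hx, Equiv.symm_apply_apply]] at h3
      · have h3 := h2 a
        simp only at h3
        rwa [show E.eH.symm (Sum.inr a) = h by rw [← hx, Equiv.symm_apply_apply]] at h3
    · intro p hp
      obtain ⟨hp1, hp2⟩ := hp
      refine ⟨fun h => Sum.elim p.1 p.2 (E.eH h), ?_, ?_⟩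
      · exact (hmemG _).2 (E.glue_isWeighting A s₁ s₂ hs₁ hs₂ hsum A₁ hA₁ A₂ hA₂ r p.1 p.2
          ((hmemG₁ _).1 hp1) ((hmemG₂ _).1 hp2))
      · have e1 : (fun h : G₁.H => Sum.elim p.1 p.2 (E.eH (E.eH.symm (Sum.inl h)))) = p.1 := by
          funext a; rw [Equiv.apply_symm_apply]; rfl
        have e2 : (fun h : G₂.H => Sum.elim p.1 p.2 (E.eH (E.eH.symm (Sum.inr h)))) = p.2 := by
          funext a; rw [Equiv.apply_symm_apply]; rfl
        show ((fun h : G₁.H => Sum.elim p.1 p.2 (E.eH (E.eH.symm (Sum.inl h)))),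
              (fun h : G₂.H => Sum.elim p.1 p.2 (E.eH (E.eH.symm (Sum.inr h))))) = p
        rw [e1, e2]
end

section
/- Fix a graph Γ of genus g with n legs and k ∈ ℤ, and let A ∈ ℤⁿ satisfy Σ_i a_i = k(2g−2+n). Let Γ' be the graph with n + #V legs obtained from Γ by attaching one new leg at each vertex v ∈ V, and let A' ∈ ℤ^{n+#V} be A followed by the entries −k(2g(v)−2+n(v)) for v ∈ V, where n(v) is the number of half-edges of Γ at v. Then: (a) the sum of the entries of A' is 0 (equivalently, Σ_{v∈V} (2g(v)−2+n(v)) = 2g−2+n); (b) h¹(Γ') = h¹(Γ); (c) for every integer r ≥ 1, extending a weighting w ∈ W^Γ_{A,r} (for A with twist k) by assigning to the new leg at each vertex v the value (−k(2g(v)−2+n(v))) mod r gives a bijection W^Γ_{A,r} ≅ W^{Γ'}_{A',r}, where W^{Γ'}_{A',r} is the set of weightings on Γ' for A' mod r with twist 0; consequently S^Γ_{A,r}(Q) = S^{Γ'}_{A',r}(Q) for every Q ∈ ℤ[x_h : h ∈ H∖L] (the non-leg half-edges of Γ and Γ' coincide). -/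
open scoped BigOperators

/-! Attaching a leg at `v` carrying `-k(2g(v)-2+n(v))` absorbs the twist of the vertex
condition at `v`: a weighting of `Γ'` restricts to a weighting of `Γ`, and its value on the new
leg at `v` is forced modulo `r`, so weightings of `Γ'` are exactly the extensions of weightings
of `Γ`. The new legs add no edges, so `h¹` is unchanged, and `∑ A' = 0` because
`∑_v n(v) = #H = 2#E + n`. -/

theorem Function.Involutive.even_card_filter_ne {α : Type*} [Fintype α] [DecidableEq α]
    {f : α → α} (hf : Function.Involutive f) :
    Even (Finset.univ.filter fun a => f a ≠ a).card := by
  rw [even_iff_two_dvd, ← ZMod.natCast_eq_zero_iff, Finset.card_eq_sum_ones, Nat.cast_sum]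
  refine Finset.sum_involution (fun a _ => f a) (fun a _ => by decide) (fun a ha _ => ?_)
    (fun a ha => ?_) (fun a _ => hf a)
  · exact (Finset.mem_filter.1 ha).2
  · simp only [Finset.mem_filter, Finset.mem_univ, true_and] at ha ⊢
    rw [hf a]
    exact fun h => ha h.symm

lemma intFin_modEq (r : ℕ) (hr : 0 < r) (m : ℤ) :
    ((intFin r hr m : ℕ) : ℤ) ≡ m [ZMOD r] := by
  have hm : 0 ≤ m % (r : ℤ) := Int.emod_nonneg m (by exact_mod_cast hr.ne')
  simp only [intFin, Int.toNat_of_nonneg hm]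
  exact Int.mod_modEq m r

lemma eq_intFin_of_modEq {r : ℕ} (hr : 0 < r) {x : Fin r} {m : ℤ}
    (h : ((x : ℕ) : ℤ) ≡ m [ZMOD r]) : x = intFin r hr m :=
  Fin.ext <| Nat.ModEq.eq_of_lt_of_lt (Int.natCast_modEq_iff.1 (h.trans (intFin_modEq r hr m).symm))
    x.isLt (intFin r hr m).isLt

namespace LegGraph

variable {n : ℕ} (G : LegGraph n)

def eulerChar (v : G.V) : ℤ :=
  2 * (G.genus v : ℤ) - 2 + (G.deg v : ℤ)

noncomputable def addLegsWeights (k : ℤ) (A : Fin n → ℤ) :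
    Fin (n + Fintype.card G.V) → ℤ :=
  Fin.append A fun j => -(k * G.eulerChar ((Fintype.equivFin G.V).symm j))

lemma eq_addLegsWeights {k : ℤ} {A : Fin n → ℤ} {A' : Fin (n + Fintype.card G.V) → ℤ}
    (hA' : ∀ i : Fin n, A' (Fin.castAdd (Fintype.card G.V) i) = A i)
    (hA'' : ∀ j : Fin (Fintype.card G.V),
      A' (Fin.natAdd n j) = -(k * G.eulerChar ((Fintype.equivFin G.V).symm j))) :
    A' = G.addLegsWeights k A :=
  funext <| Fin.addCases (by simp [addLegsWeights, hA']) (by simp [addLegsWeights, hA''])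

lemma mem_weightings {k : ℤ} {A : Fin n → ℤ} {r : ℕ} {w : G.H → Fin r} :
    w ∈ G.weightings k A r ↔ G.IsWeighting k A r w := by
  classical
  simp [weightings]

lemma filter_fixed_eq_map_leg :
    Finset.univ.filter (fun h : G.H => G.ι h = h) = Finset.univ.map ⟨G.leg, G.leg_inj⟩ := by
  ext h
  simp [G.leg_iff]

lemma card_H : Fintype.card G.H = 2 * G.edgeCard + n := by
  have hfix : (Finset.univ.filter fun h : G.H => G.ι h = h).card = n := by
    rw [G.filter_fixed_eq_map_leg, Finset.card_map, Finset.card_univ, Fintype.card_fin]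
  have hmoved : (Finset.univ.filter fun h : G.H => G.ι h ≠ h).card = 2 * G.edgeCard :=
    (Nat.mul_div_cancel' (Function.Involutive.even_card_filter_ne G.ι_invol).two_dvd).symm
  rw [← Finset.card_univ, ← Finset.card_filter_add_card_filter_not (fun h : G.H => G.ι h = h),
    hfix, hmoved, add_comm]

lemma sum_deg_eq_card_H : ∑ v : G.V, G.deg v = Fintype.card G.H :=
  (Finset.card_eq_sum_card_fiberwise (f := G.root) (fun _ _ => Finset.mem_univ _)).symm

lemma sum_eulerChar : ∑ v : G.V, G.eulerChar v = 2 * G.genusTot - 2 + n := by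
  have hdeg : ∑ v : G.V, (G.deg v : ℤ) = 2 * G.edgeCard + n := by
    exact_mod_cast G.sum_deg_eq_card_H.trans G.card_H
  simp only [eulerChar, Finset.sum_add_distrib, Finset.sum_sub_distrib, ← Finset.mul_sum,
    Finset.sum_const, Finset.card_univ, nsmul_eq_mul, hdeg, genusTot, h1]
  ring

lemma addLegs_edgeCard : G.addLegs.edgeCard = G.edgeCard := by
  have h := G.addLegs.card_H
  have h' := G.card_H
  have hsum : Fintype.card G.addLegs.H = Fintype.card G.H + Fintype.card G.V := Fintype.card_sum
  omega

lemma addLegs_h1 : G.addLegs.h1 = G.h1 := by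
  rw [h1, addLegs_edgeCard]
  rfl

lemma addLegs_ι_inl (h : G.H) : G.addLegs.ι (.inl h) = .inl (G.ι h) := rfl

lemma addLegs_ι_inr (v : G.V) : G.addLegs.ι (.inr v) = .inr v := rfl

lemma addLegs_leg_castAdd (i : Fin n) :
    G.addLegs.leg (Fin.castAdd _ i) = .inl (G.leg i) :=
  dif_pos i.isLt

lemma addLegs_leg_natAdd (j : Fin (Fintype.card G.V)) :
    G.addLegs.leg (Fin.natAdd n j) = .inr ((Fintype.equivFin G.V).symm j) := by
  simp [addLegs]

/- `G.addLegs.H` is `G.H ⊕ G.V` only after unfolding `addLegs`, so `simp` cannot use the `Sum`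
lemmas directly; these restate the ones needed. -/
lemma forall_addLegs_H {P : G.addLegs.H → Prop} :
    (∀ h, P h) ↔ (∀ h, P (.inl h)) ∧ ∀ v, P (.inr v) :=
  Sum.forall

lemma sum_addLegs_H {M : Type*} [AddCommMonoid M] (f : G.addLegs.H → M) :
    ∑ h, f h = ∑ h, f (.inl h) + ∑ v, f (.inr v) :=
  Fintype.sum_sum_type f

lemma addLegs_inl_inj {h h' : G.H} : @Eq G.addLegs.H (.inl h) (.inl h') ↔ h = h' :=
  Sum.inl_injective.eq_iff

lemma sum_ite_addLegs_root_inr {M : Type*} [AddCommMonoid M] (f : G.V → M) (v : G.addLegs.V) :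
    ∑ u : G.V, (if G.addLegs.root (.inr u) = v then f u else 0) = f v :=
  (Fintype.sum_eq_single v fun _ hu => if_neg hu).trans (if_pos rfl)

variable {G} {k : ℤ} {A : Fin n → ℤ}

lemma isWeighting_addLegs_sumElim_iff {r : ℕ} (w : G.H → Fin r) (c : G.V → Fin r) :
    G.addLegs.IsWeighting 0 (G.addLegsWeights k A) r (Sum.elim w c) ↔
      G.IsWeighting k A r w ∧ ∀ v, ((c v : ℕ) : ℤ) ≡ -(k * G.eulerChar v) [ZMOD r] := by
  have hvertex {s m c : ℤ} (hc : c ≡ -m [ZMOD r]) : s + c ≡ 0 [ZMOD r] ↔ s ≡ m [ZMOD r] :=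
    ⟨fun h => by simpa using h.sub hc, fun h => by simpa using h.add hc⟩
  simp only [IsWeighting, Fin.forall_fin_add, addLegs_leg_castAdd, addLegs_leg_natAdd,
    addLegsWeights, Fin.append_left, Fin.append_right,
    Sum.elim_inl, Sum.elim_inr, forall_addLegs_H, addLegs_ι_inl, addLegs_ι_inr, addLegs_inl_inj,
    ne_eq, Finset.sum_filter, sum_addLegs_H, sum_ite_addLegs_root_inr, zero_mul]
  constructor
  · rintro ⟨⟨hleg, hc⟩, ⟨hedge, -⟩, hvert⟩
    have hc' (v : G.V) := by simpa using hc (Fintype.equivFin G.V v)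
    exact ⟨⟨hleg, hedge, fun v => (hvertex (hc' v)).1 (hvert v)⟩, hc'⟩
  · rintro ⟨⟨hleg, hedge, hvert⟩, hc⟩
    exact ⟨⟨hleg, fun j => hc _⟩, ⟨hedge, fun _ hv => absurd rfl hv⟩,
      fun v => (hvertex (hc v)).2 (hvert v)⟩

lemma sum_addLegsWeights_eq_zero {g : ℕ} (hg : G.genusTot = (g : ℤ))
    (hA : ∑ i, A i = k * (2 * (g : ℤ) - 2 + (n : ℤ))) :
    ∑ i, G.addLegsWeights k A i = 0 := by
  rw [addLegsWeights, Fin.sum_univ_add]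
  simp only [Fin.append_left, Fin.append_right, Finset.sum_neg_distrib, ← Finset.mul_sum,
    Equiv.sum_comp (Fintype.equivFin G.V).symm G.eulerChar, G.sum_eulerChar, hg, hA]
  ring

theorem bijOn_sumElim_weightings {r : ℕ} (hr : 0 < r) :
    Set.BijOn (fun w : G.H → Fin r =>
        (Sum.elim w fun v => intFin r hr (-(k * G.eulerChar v)) : G.addLegs.H → Fin r))
      (G.weightings k A r)
      (G.addLegs.weightings 0 (G.addLegsWeights k A) r : Set (G.addLegs.H → Fin r)) := by
  refine ⟨fun w hw => ?_, fun _ _ _ _ h => funext fun x => congrFun h (.inl x),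
    fun w' hw' => ?_⟩
  · exact (mem_weightings _).2 <|
      (isWeighting_addLegs_sumElim_iff _ _).2
        ⟨(mem_weightings _).1 hw, fun _ => intFin_modEq r hr _⟩
  · obtain ⟨hw, hc⟩ := (isWeighting_addLegs_sumElim_iff (w' ∘ .inl) (w' ∘ .inr)).1 <| by
      rw [Sum.elim_comp_inl_inr]
      exact (mem_weightings _).1 hw'
    refine ⟨w' ∘ .inl, (mem_weightings _).2 hw, ?_⟩
    conv_rhs => rw [← Sum.elim_comp_inl_inr w']
    exact congrArg _ (funext fun v => (eq_intFin_of_modEq hr (hc v)).symm)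

theorem S_eq_S_addLegs
    (emb : G.NonLeg → G.addLegs.NonLeg) (hemb : ∀ h : G.NonLeg, (emb h).1 = .inl h.1)
    (Q : MvPolynomial G.NonLeg ℤ) {r : ℕ} (hr : 0 < r) :
    G.S k A Q r = G.addLegs.S 0 (G.addLegsWeights k A) (MvPolynomial.rename emb Q) r := by
  obtain ⟨hmaps, hinj, hsurj⟩ := bijOn_sumElim_weightings hr
  rw [S, S, addLegs_h1]
  congr 1
  refine Finset.sum_nbij _ hmaps hinj hsurj fun w _ => ?_
  rw [MvPolynomial.eval_rename]
  congr 3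
  funext h
  simp [hemb]

end LegGraph

theorem add_legs_reduction_general {n : ℕ} (G : LegGraph n) (g : ℕ)
    (hg : G.genusTot = (g : ℤ)) (k : ℤ) (A : Fin n → ℤ)
    (hA : ∑ i, A i = k * (2 * (g : ℤ) - 2 + (n : ℤ)))
    (A' : Fin (n + Fintype.card G.V) → ℤ)
    (hA' : ∀ i : Fin n, A' (Fin.castAdd (Fintype.card G.V) i) = A i)
    (hA'' : ∀ j : Fin (Fintype.card G.V),
      A' (Fin.natAdd n j) =
        -(k * (2 * (G.genus ((Fintype.equivFin G.V).symm j) : ℤ) - 2 +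
          (G.deg ((Fintype.equivFin G.V).symm j) : ℤ)))) :
    (∑ i, A' i = 0) ∧
    G.addLegs.h1 = G.h1 ∧
    (∀ (r : ℕ) (hr : 0 < r),
      Set.BijOn
        (fun w : G.H → Fin r =>
          (Sum.elim w (fun v : G.V =>
            intFin r hr (-(k * (2 * (G.genus v : ℤ) - 2 + (G.deg v : ℤ))))) :
            G.addLegs.H → Fin r))
        (↑(G.weightings k A r))
        (↑(show Finset (G.H ⊕ G.V → Fin r) from G.addLegs.weightings 0 A' r))) ∧
    (∀ (emb : G.NonLeg → G.addLegs.NonLeg), (∀ h : G.NonLeg, (emb h).1 = Sum.inl h.1) →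
      ∀ (Q : MvPolynomial G.NonLeg ℤ) (r : ℕ), 0 < r →
        G.S k A Q r = G.addLegs.S 0 A' (MvPolynomial.rename emb Q) r) := by
  obtain rfl := G.eq_addLegsWeights hA' hA''
  exact ⟨LegGraph.sum_addLegsWeights_eq_zero hg hA, G.addLegs_h1,
    fun _ hr => LegGraph.bijOn_sumElim_weightings hr,
    fun emb hemb Q _ hr => LegGraph.S_eq_S_addLegs emb hemb Q hr⟩

/-- Let `Γ'` be `Γ` with one new leg attached at every vertex and let
`A'` be `A` followed by the values `-k(2g(v)-2+n(v))`.  Then (a) `∑ A' = 0`;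
(b) `h¹(Γ') = h¹(Γ)`; (c) extending a weighting by the value `(-k(2g(v)-2+n(v))) mod r`
at the new leg at each vertex `v` gives a bijection `W^Γ_{A,r} ≅ W^{Γ'}_{A',r}` (twist `k`
on `Γ`, twist `0` on `Γ'`), and consequently `S^Γ_{A,r}(Q) = S^{Γ'}_{A',r}(Q)`. -/
theorem add_legs_reduction {n : ℕ} (G : LegGraph n) (hG : G.Connected) (g : ℕ)
    (hg : G.genusTot = (g : ℤ)) (k : ℤ) (A : Fin n → ℤ)
    (hA : ∑ i, A i = k * (2 * (g : ℤ) - 2 + (n : ℤ)))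
    (A' : Fin (n + Fintype.card G.V) → ℤ)
    (hA' : ∀ i : Fin n, A' (Fin.castAdd (Fintype.card G.V) i) = A i)
    (hA'' : ∀ j : Fin (Fintype.card G.V),
      A' (Fin.natAdd n j) =
        -(k * (2 * (G.genus ((Fintype.equivFin G.V).symm j) : ℤ) - 2 +
          (G.deg ((Fintype.equivFin G.V).symm j) : ℤ)))) :
    (∑ i, A' i = 0) ∧
    G.addLegs.h1 = G.h1 ∧
    (∀ (r : ℕ) (hr : 0 < r),
      Set.BijOn
        (fun w : G.H → Fin r =>
          (Sum.elim w (fun v : G.V =>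
            intFin r hr (-(k * (2 * (G.genus v : ℤ) - 2 + (G.deg v : ℤ))))) :
            G.addLegs.H → Fin r))
        (↑(G.weightings k A r))
        (↑(show Finset (G.H ⊕ G.V → Fin r) from G.addLegs.weightings 0 A' r))) ∧
    (∀ (emb : G.NonLeg → G.addLegs.NonLeg), (∀ h : G.NonLeg, (emb h).1 = Sum.inl h.1) →
      ∀ (Q : MvPolynomial G.NonLeg ℤ) (r : ℕ), 0 < r →
        G.S k A Q r = G.addLegs.S 0 A' (MvPolynomial.rename emb Q) r) :=
  add_legs_reduction_general G g hg k A hA A' hA' hA''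
end

section
/- Let f : ℤ → ℚ be a function and suppose there exists a polynomial P ∈ ℚ[x,y] such that f(a − b) = P(a,b) for all natural numbers a, b ≥ 0. Then there exists a polynomial p ∈ ℚ[t] such that f(c) = p(c) for all integers c; equivalently, a function of ℤ which is polynomial in (a,b) on the set of differences a − b with a, b ≥ 0 is itself a polynomial function of the difference. -/
open scoped BigOperators

/-! If `c = a - b` with `a, b ∈ ℕ`, then `t ↦ P(a + t, b + t)` is a one-variable polynomial
taking the value `f c` at every natural number `t`, hence it is constant. Evaluating it at
`t = -b` gives `f c = P(c, 0)`, so `p(t) = P(t, 0)` works. -/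

open Polynomial

namespace MvPolynomial

theorem polynomial_eval_aeval {R σ : Type*} [CommSemiring R] (P : MvPolynomial σ R)
    (g : σ → R[X]) (x : R) : (aeval g P).eval x = eval (fun i => (g i).eval x) P := by
  simpa using comp_aeval_apply g (Polynomial.aeval x) P

theorem eval_line_eq_of_forall_natCast {R σ : Type*} [CommRing R] [IsDomain R] [CharZero R]
    (P : MvPolynomial σ R) (w v : σ → R) {k : R} (h : ∀ n : ℕ, eval (w + (n : R) • v) P = k)
    (x : R) : eval (w + x • v) P = k := by
  set g : R[X] := aeval (fun i => Polynomial.C (w i) + Polynomial.X * Polynomial.C (v i)) P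
  have hg : ∀ y, g.eval y = eval (w + y • v) P := by
    intro y
    rw [polynomial_eval_aeval]
    congr 2
    funext i
    simp only [Pi.add_apply, Pi.smul_apply, smul_eq_mul, Polynomial.eval_add,
      Polynomial.eval_mul, Polynomial.eval_C, Polynomial.eval_X]
  have hconst : g = Polynomial.C k := by
    refine eq_of_infinite_eval_eq _ _
      ((Set.infinite_range_of_injective Nat.cast_injective).mono ?_)
    rintro _ ⟨n, rfl⟩
    simp [hg, h]
  rw [← hg, hconst, Polynomial.eval_C]

end MvPolynomial

/-- If `f : ℤ → ℚ` satisfies `f (a - b) = P (a, b)` for a two-variable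
polynomial `P` and all naturals `a, b`, then `f` is given by a one-variable polynomial on
all of `ℤ`. -/
theorem polynomial_in_difference (f : ℤ → ℚ)
    (h : ∃ P : MvPolynomial (Fin 2) ℚ, ∀ a b : ℕ,
      f ((a : ℤ) - (b : ℤ)) = MvPolynomial.eval ![(a : ℚ), (b : ℚ)] P) :
    ∃ p : Polynomial ℚ, ∀ c : ℤ, f c = p.eval ((c : ℤ) : ℚ) := by
  obtain ⟨P, hP⟩ := h
  refine ⟨MvPolynomial.aeval ![X, 0] P, fun c => ?_⟩
  obtain ⟨a, b, rfl⟩ : ∃ a b : ℕ, c = a - b := ⟨c.toNat, (-c).toNat, by omega⟩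
  have hdiag : ∀ n : ℕ, MvPolynomial.eval (![(a : ℚ), b] + (n : ℚ) • 1) P = f (a - b) := by
    intro n
    rw [show (a : ℤ) - b = ((a + n : ℕ) : ℤ) - ((b + n : ℕ) : ℤ) by push_cast; ring, hP]
    congr 2
    funext i
    fin_cases i <;> simp
  rw [← MvPolynomial.eval_line_eq_of_forall_natCast P _ _ hdiag (-b),
    MvPolynomial.polynomial_eval_aeval]
  congr 2
  funext i
  fin_cases i <;> simp [sub_eq_add_neg]
end
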